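/- Let σ be a Radon measure on ℂ and suppose that for some p ∈ ℕ and some R > 0, ∫_{|x|>R} |x|^{-(p+1)} dσ(x) < ∞. Then for π_σ-almost every configuration γ, the product Π_p(z, γ) = ∏_{x ∈ γ, x ≠ 0} E_p(z/x) converges locally uniformly on ℂ and defines an entire function of z. -/

import Mathlib

open Complex MeasureTheory Filter

noncomputable def weierstrassE (p : ℕ) (z : ℂ) : ℂ :=
  (1 - z) * Complex.exp (∑ k ∈ Finset.Icc 1 p, z ^ k / (k : ℂ))

instance : MeasurableSpace (Set ℂ) :=
  .generateFrom {A | ∃ (B : Set ℂ) (n : ℕ), MeasurableSet B ∧ A = {γ | (γ ∩ B).ncard = n}}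

def IsPoissonPP (π : Measure (Set ℂ)) (σ : Measure ℂ) : Prop :=
  IsProbabilityMeasure π ∧
  (∀ᵐ γ ∂π, ∀ K : Set ℂ, IsCompact K → (γ ∩ K).Finite) ∧
  ∀ f : ℂ → ℝ, Continuous f → HasCompactSupport f →
    ∫ γ, Real.exp (∑' x : γ, f (x : ℂ)) ∂π =
      Real.exp (∫ x, (Real.exp (f x) - 1) ∂σ)

/-!
For `‖z‖ ≤ M` and `‖x‖ ≥ 2M` the Taylor expansion of `log (1 - w)` gives
`|E_p(z/x) - 1| ≤ 4 M^{p+1} |x|^{-(p+1)}`, so the product converges locally uniformly, to an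
entire function, as soon as `γ` is locally finite and `∑_{x ∈ γ} |x|^{-(p+1)} < ∞`.

Almost surely both hold. Local finiteness is part of the definition of `π_σ`. For summability
put `h x = max (|x|, R)^{-(p+1)}`, which is `σ`-integrable by hypothesis, and
`S γ = ∑_{x ∈ γ} h x ∈ [0, ∞]`. Truncating `h` by continuous cutoffs and passing to the limit in
the Laplace functional gives `E[exp (-t S)] ≥ exp (-t ∫ h dσ)` for every `t > 0`, hence
`P(S = ∞) ≤ 1 - exp (-t ∫ h dσ) ≤ t ∫ h dσ`, and letting `t → 0`, `S < ∞` almost surely.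
-/

open Topology

lemma logTaylor_succ_neg (p : ℕ) (w : ℂ) :
    logTaylor (p + 1) (-w) = -∑ k ∈ Finset.Icc 1 p, w ^ k / (k : ℂ) := by
  induction p with
  | zero => simp [logTaylor_succ, logTaylor_zero]
  | succ p ih =>
    have hsign : (-1 : ℂ) ^ (p + 1 + 1) * (-1) ^ (p + 1) = -1 := by
      rw [← pow_add]; exact Odd.neg_one_pow ⟨p + 1, by ring⟩
    rw [logTaylor_succ, Pi.add_apply, ih, Finset.sum_Icc_succ_top (by omega), neg_pow w]
    push_cast
    linear_combination (w ^ (p + 1) / ((p : ℂ) + 1)) * hsign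

lemma norm_weierstrassE_sub_one_le (p : ℕ) {w : ℂ} (hw : ‖w‖ ≤ 1 / 2) :
    ‖weierstrassE p w - 1‖ ≤ 4 * ‖w‖ ^ (p + 1) := by
  have hw1 : ‖w‖ < 1 := hw.trans_lt (by norm_num)
  set r := log (1 - w) + ∑ k ∈ Finset.Icc 1 p, w ^ k / (k : ℂ)
  have hE : weierstrassE p w = exp r := by
    have hw' : 1 - w ≠ 0 := sub_ne_zero.mpr fun h => by simp [← h] at hw1
    rw [weierstrassE, exp_add, exp_log hw']
  have hr : ‖r‖ ≤ 2 * ‖w‖ ^ (p + 1) := by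
    have hslit : (1 - w).arg ≠ Real.pi := slitPlane_arg_ne_pi <| by
      simpa [sub_eq_add_neg] using mem_slitPlane_of_norm_lt_one (z := -w) (by simpa using hw1)
    have h := norm_log_one_sub_inv_add_logTaylor_neg_le p hw1
    rw [log_inv _ hslit, logTaylor_succ_neg, ← neg_add, norm_neg] at h
    calc ‖r‖ ≤ ‖w‖ ^ (p + 1) * (1 - ‖w‖)⁻¹ / (p + 1) := h
      _ ≤ ‖w‖ ^ (p + 1) * 2 / 1 := by
        gcongr
        · rw [inv_le_comm₀ (by linarith) two_pos]; linarith
        · linarith [p.cast_nonneg (α := ℝ)]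
      _ = 2 * ‖w‖ ^ (p + 1) := by ring
  have hr1 : ‖r‖ ≤ 1 := hr.trans <| by
    linarith [pow_le_of_le_one (n := p + 1) (norm_nonneg w) hw1.le p.succ_ne_zero]
  rw [hE]
  linarith [norm_exp_sub_one_le hr1]

lemma differentiable_weierstrassE (p : ℕ) : Differentiable ℂ (weierstrassE p) := by
  unfold weierstrassE; fun_prop

lemma norm_weierstrassE_div_sub_one_le (p : ℕ) {z x : ℂ} {M : ℝ} (hz : ‖z‖ ≤ M)
    (hx : 2 * M ≤ ‖x‖) :
    ‖weierstrassE p (z / x) - 1‖ ≤ 4 * M ^ (p + 1) * ‖x‖⁻¹ ^ (p + 1) := by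
  have hzx : ‖z / x‖ ≤ M * ‖x‖⁻¹ := by
    rw [norm_div, div_eq_mul_inv]; gcongr
  have hMx : M * ‖x‖⁻¹ ≤ 1 / 2 := by
    rcases (norm_nonneg x).eq_or_lt with hx0 | hx0
    · simp [← hx0]
    · rw [← div_eq_mul_inv, div_le_iff₀ hx0]; linarith
  calc ‖weierstrassE p (z / x) - 1‖ ≤ 4 * ‖z / x‖ ^ (p + 1) :=
        norm_weierstrassE_sub_one_le p (hzx.trans hMx)
    _ ≤ 4 * (M * ‖x‖⁻¹) ^ (p + 1) := by gcongr
    _ = 4 * M ^ (p + 1) * ‖x‖⁻¹ ^ (p + 1) := by ring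

lemma finite_setOf_norm_le {E : Type*} [NormedAddCommGroup E] [ProperSpace E] {s : Set E}
    (hs : ∀ K : Set E, IsCompact K → (s ∩ K).Finite) (r : ℝ) :
    {x : s | ‖(x : E)‖ ≤ r}.Finite := by
  refine ((hs _ (isCompact_closedBall 0 r)).preimage Subtype.val_injective.injOn).subset ?_
  intro x hx
  exact ⟨x.2, by simpa using hx⟩

lemma hasProdUniformlyOn_weierstrassE_div (p : ℕ) {s : Set ℂ}
    (hs : ∀ K : Set ℂ, IsCompact K → (s ∩ K).Finite)
    (hsum : Summable fun x : s => ‖(x : ℂ)‖⁻¹ ^ (p + 1)) {K : Set ℂ} (hK : IsCompact K) :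
    HasProdUniformlyOn (fun (x : s) (z : ℂ) => weierstrassE p (z / x))
      (fun z => ∏' x : s, weierstrassE p (z / x)) K := by
  obtain ⟨M, hM⟩ := hK.isBounded.exists_norm_le
  have hbound : ∀ᶠ x : s in cofinite, ∀ z ∈ K,
      ‖weierstrassE p (z / x) - 1‖ ≤ 4 * M ^ (p + 1) * ‖(x : ℂ)‖⁻¹ ^ (p + 1) := by
    filter_upwards [(finite_setOf_norm_le hs (2 * M)).eventually_cofinite_notMem] with x hx z hz
    exact norm_weierstrassE_div_sub_one_le p (hM z hz) (not_le.mp hx).le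
  have hcont : ∀ x : s, ContinuousOn (fun z => weierstrassE p (z / x) - 1) K := fun x =>
    ((differentiable_weierstrassE p).continuous.comp (continuous_id.div_const _)
      |>.sub continuous_const).continuousOn
  simpa only [add_sub_cancel] using
    Summable.hasProdUniformlyOn_one_add hK (hsum.mul_left _) hbound hcont

theorem exists_differentiable_tendstoUniformlyOn_prod_weierstrassE (p : ℕ) {s : Set ℂ}
    (hs : ∀ K : Set ℂ, IsCompact K → (s ∩ K).Finite)
    (hsum : Summable fun x : s => ‖(x : ℂ)‖⁻¹ ^ (p + 1)) :
    ∃ f : ℂ → ℂ, Differentiable ℂ f ∧ ∀ K : Set ℂ, IsCompact K →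
      TendstoUniformlyOn (fun (t : Finset s) (z : ℂ) => ∏ x ∈ t, weierstrassE p (z / x))
        f atTop K := by
  have hunif := fun K (hK : IsCompact K) =>
    hasProdUniformlyOn_iff_tendstoUniformlyOn.mp (hasProdUniformlyOn_weierstrassE_div p hs hsum hK)
  refine ⟨_, ?_, hunif⟩
  rw [← differentiableOn_univ]
  refine TendstoLocallyUniformlyOn.differentiableOn
    ((tendstoLocallyUniformlyOn_iff_forall_isCompact isOpen_univ).mpr fun K _ hK => hunif K hK)
    (Eventually.of_forall fun t => ?_) isOpen_univ
  exact (Differentiable.fun_finsetProd fun x _ =>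
    (differentiable_weierstrassE p).comp (differentiable_id.div_const _)).differentiableOn

section Cutoff

variable {E : Type*} [NormedAddCommGroup E]

def cutoff (n : ℕ) (x : E) : ℝ := max 0 (min 1 (n + 1 - ‖x‖))

lemma cutoff_nonneg (n : ℕ) (x : E) : 0 ≤ cutoff n x := le_max_left _ _

lemma cutoff_le_one (n : ℕ) (x : E) : cutoff n x ≤ 1 := max_le zero_le_one (min_le_left _ _)

lemma cutoff_eq_one {n : ℕ} {x : E} (hx : ‖x‖ ≤ n) : cutoff n x = 1 := by
  rw [cutoff, min_eq_left (by linarith), max_eq_right zero_le_one]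

lemma cutoff_eq_zero {n : ℕ} {x : E} (hx : n + 1 ≤ ‖x‖) : cutoff n x = 0 :=
  max_eq_left (min_le_of_right_le (by linarith))

lemma monotone_cutoff (x : E) : Monotone fun n : ℕ => cutoff n x := fun m n hmn =>
  max_le_max le_rfl <| min_le_min le_rfl <| by
    have : (m : ℝ) ≤ n := Nat.cast_le.mpr hmn
    linarith

@[fun_prop]
lemma continuous_cutoff (n : ℕ) : Continuous (cutoff n : E → ℝ) := by
  unfold cutoff; fun_prop

lemma hasCompactSupport_cutoff [ProperSpace E] (n : ℕ) : HasCompactSupport (cutoff n : E → ℝ) :=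
  HasCompactSupport.intro (isCompact_closedBall 0 (n + 1)) fun x hx =>
    cutoff_eq_zero (by simp at hx; exact hx.le)

noncomputable def truncatedSum (h : E → ℝ) (n : ℕ) (γ : Set E) : ℝ :=
  ∑' x : γ, h x * cutoff n (x : E)

variable {h : E → ℝ} {γ : Set E}

lemma truncatedSum_nonneg (h0 : 0 ≤ h) (n : ℕ) (γ : Set E) : 0 ≤ truncatedSum h n γ :=
  tsum_nonneg fun x => mul_nonneg (h0 x) (cutoff_nonneg n (x : E))

/-- `exp (-t ∑_{x ∈ γ} h x)`, read as `0` when the sum diverges. -/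
noncomputable def expNegSum (h : E → ℝ) (t : ℝ) (γ : Set E) : ℝ :=
  ⨅ n, Real.exp (-(t * truncatedSum h n γ))

lemma expNegSum_nonneg (h : E → ℝ) (t : ℝ) (γ : Set E) : 0 ≤ expNegSum h t γ :=
  Real.iInf_nonneg fun _ => (Real.exp_pos _).le

lemma expNegSum_le_one (h0 : 0 ≤ h) {t : ℝ} (ht : 0 ≤ t) (γ : Set E) : expNegSum h t γ ≤ 1 :=
  (ciInf_le ⟨0, by rintro _ ⟨n, rfl⟩; positivity⟩ 0).trans <| Real.exp_le_one_iff.mpr <|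
    neg_nonpos.mpr <| mul_nonneg ht (truncatedSum_nonneg h0 0 γ)

variable [ProperSpace E]

lemma summable_mul_cutoff (hγ : ∀ K : Set E, IsCompact K → (γ ∩ K).Finite) (h : E → ℝ)
    (n : ℕ) : Summable fun x : γ => h x * cutoff n (x : E) := by
  refine summable_of_hasFiniteSupport <| show Set.Finite _ from
    (finite_setOf_norm_le hγ (n + 1)).subset fun x hx => ?_
  by_contra hx'
  exact hx (by simp only [cutoff_eq_zero (not_le.mp hx').le, mul_zero])

lemma monotone_truncatedSum (hγ : ∀ K : Set E, IsCompact K → (γ ∩ K).Finite) (h0 : 0 ≤ h) :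
    Monotone fun n => truncatedSum h n γ := fun m n hmn =>
  (summable_mul_cutoff hγ h m).tsum_le_tsum
    (fun x => mul_le_mul_of_nonneg_left (monotone_cutoff (x : E) hmn) (h0 x))
    (summable_mul_cutoff hγ h n)

lemma tendsto_truncatedSum_atTop (hγ : ∀ K : Set E, IsCompact K → (γ ∩ K).Finite)
    (h0 : 0 ≤ h) (hns : ¬Summable fun x : γ => h x) :
    Tendsto (fun n => truncatedSum h n γ) atTop atTop := by
  refine tendsto_atTop_atTop_of_monotone (monotone_truncatedSum hγ h0) fun b => ?_
  by_contra! hb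
  refine hns (summable_of_sum_le (c := b) (fun x => h0 x) fun F => ?_)
  obtain ⟨n, hn⟩ := ((eventually_all_finset F).mpr fun x _ =>
    eventually_ge_atTop ⌈‖(x : E)‖⌉₊).exists
  calc ∑ x ∈ F, h x = ∑ x ∈ F, h x * cutoff n (x : E) :=
        Finset.sum_congr rfl fun x hx => by rw [cutoff_eq_one (Nat.ceil_le.mp (hn x hx)), mul_one]
    _ ≤ truncatedSum h n γ := (summable_mul_cutoff hγ h n).sum_le_tsum F
        fun x _ => mul_nonneg (h0 x) (cutoff_nonneg n (x : E))
    _ ≤ b := (hb n).le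

lemma tendsto_exp_neg_truncatedSum (hγ : ∀ K : Set E, IsCompact K → (γ ∩ K).Finite)
    (h0 : 0 ≤ h) {t : ℝ} (ht : 0 ≤ t) :
    Tendsto (fun n => Real.exp (-(t * truncatedSum h n γ))) atTop (𝓝 (expNegSum h t γ)) :=
  tendsto_atTop_ciInf (fun m n hmn => by
      gcongr
      exact monotone_truncatedSum hγ h0 hmn)
    ⟨0, by rintro _ ⟨n, rfl⟩; positivity⟩

lemma expNegSum_eq_zero (hγ : ∀ K : Set E, IsCompact K → (γ ∩ K).Finite)
    (h0 : 0 ≤ h) {t : ℝ} (ht : 0 < t) (hns : ¬Summable fun x : γ => h x) :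
    expNegSum h t γ = 0 :=
  tendsto_nhds_unique (tendsto_exp_neg_truncatedSum hγ h0 ht.le) <|
    Real.tendsto_exp_atBot.comp <| tendsto_neg_atTop_atBot.comp <|
      (tendsto_truncatedSum_atTop hγ h0 hns).const_mul_atTop ht

end Cutoff

namespace IsPoissonPP

variable {π : Measure (Set ℂ)} {σ : Measure ℂ}

/-- Measurability of `γ ↦ ∑' x : γ, f x` is never checked against the counting σ-algebra on
`Set ℂ`: it comes from the Laplace identity, whose left side would otherwise be the junk `0`. -/
lemma integrable_exp_tsum (hπ : IsPoissonPP π σ) {f : ℂ → ℝ} (hf : Continuous f)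
    (hfs : HasCompactSupport f) : Integrable (fun γ : Set ℂ => Real.exp (∑' x : γ, f x)) π := by
  by_contra hni
  have hL := hπ.2.2 f hf hfs
  rw [integral_undef hni] at hL
  exact (Real.exp_pos _).ne' hL.symm

lemma exp_neg_integral_le_integral_exp_neg_tsum (hπ : IsPoissonPP π σ) {g : ℂ → ℝ}
    (hg : Continuous g) (hgs : HasCompactSupport g) (hg0 : 0 ≤ g) (hgi : Integrable g σ) :
    Real.exp (-∫ x, g x ∂σ) ≤ ∫ γ, Real.exp (-∑' x : γ, g x) ∂π := by
  have hL := hπ.2.2 (fun x => -g x) hg.neg hgs.neg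
  simp only [tsum_neg] at hL
  rw [hL, Real.exp_le_exp, ← integral_neg]
  have hle : ∀ x, -g x ≤ Real.exp (-g x) - 1 := fun x => by linarith [Real.add_one_le_exp (-g x)]
  refine integral_mono hgi.neg (hgi.mono' (by fun_prop) (Eventually.of_forall fun x => ?_)) hle
  have := Real.exp_le_one_iff.mpr (neg_nonpos.mpr (hg0 x))
  rw [Real.norm_of_nonpos (by linarith)]
  linarith [hle x]

variable {h : ℂ → ℝ}

lemma integrable_exp_neg_truncatedSum (hπ : IsPoissonPP π σ) (hc : Continuous h) (t : ℝ)
    (n : ℕ) : Integrable (fun γ => Real.exp (-(t * truncatedSum h n γ))) π := by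
  simpa only [truncatedSum, tsum_neg, tsum_mul_left] using
    hπ.integrable_exp_tsum (f := fun x => -(t * (h x * cutoff n x))) (by fun_prop)
      ((hasCompactSupport_cutoff n).mul_left.mul_left.neg)

lemma exp_neg_integral_le_integral_exp_neg_truncatedSum (hπ : IsPoissonPP π σ)
    (hc : Continuous h) (h0 : 0 ≤ h) (hi : Integrable h σ) {t : ℝ} (ht : 0 ≤ t) (n : ℕ) :
    Real.exp (-(t * ∫ x, h x ∂σ)) ≤ ∫ γ, Real.exp (-(t * truncatedSum h n γ)) ∂π := by
  set g : ℂ → ℝ := fun x => t * (h x * cutoff n x)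
  have hg0 : 0 ≤ g := fun x => mul_nonneg ht (mul_nonneg (h0 x) (cutoff_nonneg n x))
  have hgh : ∀ x, g x ≤ t * h x := fun x =>
    mul_le_mul_of_nonneg_left (mul_le_of_le_one_right (h0 x) (cutoff_le_one n x)) ht
  have hgc : Continuous g := continuous_const.mul (hc.mul (continuous_cutoff n))
  have hgi : Integrable g σ := (hi.const_mul t).mono' hgc.aestronglyMeasurable
    (Eventually.of_forall fun x => by rw [Real.norm_of_nonneg (hg0 x)]; exact hgh x)
  calc Real.exp (-(t * ∫ x, h x ∂σ)) ≤ Real.exp (-∫ x, g x ∂σ) := by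
        rw [Real.exp_le_exp, neg_le_neg_iff, ← integral_const_mul]
        exact integral_mono hgi (hi.const_mul t) hgh
    _ ≤ _ := hπ.exp_neg_integral_le_integral_exp_neg_tsum hgc
        (hasCompactSupport_cutoff n).mul_left.mul_left hg0 hgi
    _ = _ := by simp only [g, truncatedSum, tsum_mul_left]

variable {t : ℝ}

lemma ae_tendsto_exp_neg_truncatedSum (hπ : IsPoissonPP π σ) (h0 : 0 ≤ h) (ht : 0 ≤ t) :
    ∀ᵐ γ ∂π, Tendsto (fun n => Real.exp (-(t * truncatedSum h n γ))) atTop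
      (𝓝 (expNegSum h t γ)) := by
  filter_upwards [hπ.2.1] with γ hγ using tendsto_exp_neg_truncatedSum hγ h0 ht

lemma integrable_expNegSum (hπ : IsPoissonPP π σ) (hc : Continuous h) (h0 : 0 ≤ h)
    (ht : 0 ≤ t) : Integrable (expNegSum h t) π := by
  have := hπ.1
  refine (integrable_const (1 : ℝ)).mono' (aestronglyMeasurable_of_tendsto_ae atTop
    (fun n => (hπ.integrable_exp_neg_truncatedSum hc t n).aestronglyMeasurable)
    (hπ.ae_tendsto_exp_neg_truncatedSum h0 ht)) (Eventually.of_forall fun γ => ?_)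
  rw [Real.norm_of_nonneg (expNegSum_nonneg h t γ)]
  exact expNegSum_le_one h0 ht γ

lemma tendsto_integral_exp_neg_truncatedSum (hπ : IsPoissonPP π σ) (hc : Continuous h)
    (h0 : 0 ≤ h) (ht : 0 ≤ t) :
    Tendsto (fun n => ∫ γ, Real.exp (-(t * truncatedSum h n γ)) ∂π) atTop
      (𝓝 (∫ γ, expNegSum h t γ ∂π)) := by
  have := hπ.1
  refine tendsto_integral_of_dominated_convergence (fun _ => 1)
    (fun n => (hπ.integrable_exp_neg_truncatedSum hc t n).aestronglyMeasurable)
    (integrable_const 1) (fun n => Eventually.of_forall fun γ => ?_)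
    (hπ.ae_tendsto_exp_neg_truncatedSum h0 ht)
  rw [Real.norm_of_nonneg (Real.exp_pos _).le, Real.exp_le_one_iff, neg_nonpos]
  exact mul_nonneg ht (truncatedSum_nonneg h0 n γ)

lemma measureReal_not_summable_le (hπ : IsPoissonPP π σ) (hc : Continuous h) (h0 : 0 ≤ h)
    (hi : Integrable h σ) (ht : 0 < t) :
    π.real {γ | (∀ K : Set ℂ, IsCompact K → (γ ∩ K).Finite) ∧ ¬Summable fun x : γ => h x}
      ≤ t * ∫ x, h x ∂σ := by
  have := hπ.1
  have hint := hπ.integrable_expNegSum hc h0 ht.le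
  have hlow : Real.exp (-(t * ∫ x, h x ∂σ)) ≤ ∫ γ, expNegSum h t γ ∂π :=
    ge_of_tendsto (hπ.tendsto_integral_exp_neg_truncatedSum hc h0 ht.le) <| Eventually.of_forall
      (hπ.exp_neg_integral_le_integral_exp_neg_truncatedSum hc h0 hi ht.le)
  have hmarkov := mul_meas_ge_le_integral_of_nonneg
    (Eventually.of_forall fun γ => sub_nonneg.mpr (expNegSum_le_one h0 ht.le γ))
    ((integrable_const 1).sub hint) 1
  rw [one_mul, integral_sub (integrable_const 1) hint, integral_const, probReal_univ,
    one_smul] at hmarkov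
  calc _ ≤ π.real {γ | 1 ≤ 1 - expNegSum h t γ} := measureReal_mono fun γ hγ => by
        simp [expNegSum_eq_zero hγ.1 h0 ht hγ.2]
    _ ≤ 1 - Real.exp (-(t * ∫ x, h x ∂σ)) := by linarith
    _ ≤ t * ∫ x, h x ∂σ := by linarith [Real.add_one_le_exp (-(t * ∫ x, h x ∂σ))]

theorem ae_summable (hπ : IsPoissonPP π σ) (hc : Continuous h) (h0 : 0 ≤ h)
    (hi : Integrable h σ) : ∀ᵐ γ : Set ℂ ∂π, Summable fun x : γ => h x := by
  have := hπ.1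
  set B : Set (Set ℂ) := {γ | (∀ K : Set ℂ, IsCompact K → (γ ∩ K).Finite) ∧
    ¬Summable fun x : γ => h x}
  have hB : π B = 0 := by
    refine (measureReal_eq_zero_iff).mp (le_antisymm ?_ measureReal_nonneg)
    refine ge_of_tendsto (f := fun t : ℝ => t * ∫ x, h x ∂σ) (x := 𝓝[>] 0) ?_ ?_
    · simpa using ((continuous_mul_const (∫ x, h x ∂σ)).tendsto 0).mono_left nhdsWithin_le_nhds
    · filter_upwards [self_mem_nhdsWithin] with t ht
      exact hπ.measureReal_not_summable_le hc h0 hi ht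
  filter_upwards [hπ.2.1, measure_eq_zero_iff_ae_notMem.mp hB] with γ hγ hγB
  by_contra hns
  exact hγB ⟨hγ, hns⟩

end IsPoissonPP

lemma integrable_one_div_max_norm_pow {E : Type*} [NormedAddCommGroup E] [ProperSpace E]
    [MeasurableSpace E] [OpensMeasurableSpace E] {σ : Measure E} [IsFiniteMeasureOnCompacts σ]
    {R : ℝ} (hR : 0 < R) (n : ℕ)
    (hσ : ∫⁻ x in {x : E | R < ‖x‖}, ENNReal.ofReal (1 / ‖x‖ ^ n) ∂σ < ⊤) :
    Integrable (fun x : E => 1 / max ‖x‖ R ^ n) σ := by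
  have hc : Continuous fun x : E => 1 / max ‖x‖ R ^ n :=
    continuous_const.div (by fun_prop) fun x => by positivity
  have hA : MeasurableSet {x : E | R < ‖x‖} := measurableSet_lt measurable_const measurable_norm
  rw [← integrableOn_univ, ← Set.union_compl_self {x : E | R < ‖x‖}, integrableOn_union]
  refine ⟨⟨hc.aestronglyMeasurable, ?_⟩, ?_⟩
  · rw [hasFiniteIntegral_iff_ofReal (Eventually.of_forall fun x => by positivity)]
    refine lt_of_eq_of_lt (setLIntegral_congr_fun hA fun x hx => ?_) hσ
    exact congrArg (fun r => ENNReal.ofReal (1 / r ^ n)) (max_eq_left (show R < ‖x‖ from hx).le)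
  · refine (hc.continuousOn.integrableOn_compact (isCompact_closedBall 0 R)).mono_set ?_
    intro x hx
    simpa using hx

lemma summable_inv_norm_pow {E : Type*} [NormedAddCommGroup E] [ProperSpace E] {s : Set E}
    (hs : ∀ K : Set E, IsCompact K → (s ∩ K).Finite) {R : ℝ} {n : ℕ}
    (hsum : Summable fun x : s => 1 / max ‖(x : E)‖ R ^ n) :
    Summable fun x : s => ‖(x : E)‖⁻¹ ^ n := by
  refine hsum.of_norm_bounded_eventually ?_
  filter_upwards [(finite_setOf_norm_le hs R).eventually_cofinite_notMem] with x hx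
  rw [max_eq_left (not_le.mp hx).le, norm_pow, norm_inv, norm_norm, inv_pow, one_div]

theorem poisson_random_entire_general_intensity
    (σ : Measure ℂ) [IsFiniteMeasureOnCompacts σ]
    (p : ℕ) (R : ℝ) (hR : 0 < R)
    (hσ : ∫⁻ x in {x : ℂ | R < ‖x‖},
        ENNReal.ofReal (1 / ‖x‖ ^ (p + 1)) ∂σ < ⊤)
    (π : Measure (Set ℂ)) (hπ : IsPoissonPP π σ) :
    ∀ᵐ γ ∂π, ∃ f : ℂ → ℂ, Differentiable ℂ f ∧
      ∀ K : Set ℂ, IsCompact K →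
        TendstoUniformlyOn
          (fun (s : Finset ↥(γ \ ({0} : Set ℂ))) (z : ℂ) =>
            ∏ x ∈ s, weierstrassE p (z / (x : ℂ)))
          f atTop K := by
  have hc : Continuous fun x : ℂ => 1 / max ‖x‖ R ^ (p + 1) :=
    continuous_const.div (by fun_prop) fun x => by positivity
  filter_upwards [hπ.2.1, hπ.ae_summable hc (fun x => by positivity)
    (integrable_one_div_max_norm_pow hR (p + 1) hσ)] with γ hγ hsum
  have hγ' : ∀ K : Set ℂ, IsCompact K → ((γ \ {0}) ∩ K).Finite := fun K hK =>
    (hγ K hK).subset (Set.inter_subset_inter_left _ Set.sdiff_subset)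
  have hsum' := hsum.comp_injective (Set.inclusion_injective (Set.sdiff_subset : γ \ {0} ⊆ γ))
  exact exists_differentiable_tendstoUniformlyOn_prod_weierstrassE p hγ'
    (summable_inv_norm_pow hγ' hsum')
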